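/- arXiv:2210.13579 — 5 statements merged into one kernel-verified Lean document; each statement's English description precedes it below -/
import Mathlib

section
/- Let F₁,...,F_s be homogeneous elements of S[t] of the same degree e (with deg t = 0). Suppose there exist homogeneous degree e elements G₁,...,G_s ∈ S[t] such that (1) for every i there is dᵢ ≥ 0 with t^{dᵢ}·Gᵢ lying in the S[t]-span of F₁,...,F_s in degree e, and (2) the specializations G₁|_{t=0},...,G_s|_{t=0} are linearly independent over k. Then for all but finitely many λ ∈ k, the specializations F₁|_{t=λ},...,F_s|_{t=λ} are linearly independent over k. -/
/-!
Let `A_G`, `A_F` be the coefficient matrices of the `Gᵢ`, `Fᵢ` on the monomials occurring in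
the `Gᵢ|_{t=0}`. Independence of the limit forms gives a matrix `N` over `k` with
`A_G(0) N = 1`, so `det (A_G N) ∈ k[t]` takes the value `1` at `t = 0` and is nonzero. The span
condition reads `diag (t^{dᵢ}) A_G = C A_F` for some `C` over `k[t]`, hence `det (A_F N) ≠ 0`
too. Away from its finitely many roots `λ`, the matrix `A_F(λ) N` is invertible, so the rows of
`A_F(λ)`, and with them the `Fᵢ|_{t=λ}`, are independent.
-/

open MvPolynomial Polynomial

/-- Specialization `t = λ` of an element of `S[t]` (with `S[t]` modelled as
`MvPolynomial σ k[t]`, so that `t` has degree `0`). -/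
noncomputable def specialize {σ : Type*} {k : Type*} [Field k] (lam : k)
    (F : MvPolynomial σ (Polynomial k)) : MvPolynomial σ k :=
  MvPolynomial.map (Polynomial.evalRingHom lam) F

theorem Matrix.exists_mul_eq_one_of_linearIndependent_row {m n K : Type*} [Field K]
    [Fintype m] [DecidableEq m] [Fintype n] {A : Matrix m n K} (h : LinearIndependent K A.row) :
    ∃ B : Matrix n m K, A * B = 1 := by
  refine Matrix.mulVec_surjective_iff_exists_right_inverse.mp ?_
  rw [← Matrix.coe_mulVecLin, ← LinearMap.range_eq_top]
  apply Submodule.eq_top_of_finrank_eq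
  rw [Module.finrank_fintype_fun_eq_card]
  exact h.rank_matrix

namespace MvPolynomial

variable {σ R ι : Type*}

def coeffMatrix [CommSemiring R] (T : Finset (σ →₀ ℕ)) (p : ι → MvPolynomial σ R) :
    Matrix ι T R :=
  Matrix.of fun i m => (p i).coeff m

theorem coeffMatrix_map [CommSemiring R] {S : Type*} [CommSemiring S] (f : R →+* S)
    (T : Finset (σ →₀ ℕ)) (p : ι → MvPolynomial σ R) :
    coeffMatrix T (fun i => map f (p i)) = (coeffMatrix T p).map f := by
  ext i m
  simp [coeffMatrix, coeff_map]

theorem linearIndependent_of_linearIndependent_row_coeffMatrix [CommSemiring R]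
    {T : Finset (σ →₀ ℕ)} {p : ι → MvPolynomial σ R}
    (h : LinearIndependent R (coeffMatrix T p).row) : LinearIndependent R p :=
  LinearIndependent.of_comp (LinearMap.pi fun m : T => lcoeff R m.1) h

theorem linearIndependent_row_coeffMatrix [CommRing R] [Fintype ι] {T : Finset (σ →₀ ℕ)}
    {p : ι → MvPolynomial σ R} (hT : ∀ i, (p i).support ⊆ T) (h : LinearIndependent R p) :
    LinearIndependent R (coeffMatrix T p).row := by
  rw [Fintype.linearIndependent_iff] at h ⊢
  refine fun c hc => h c (MvPolynomial.ext _ _ fun m => ?_)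
  rw [coeff_sum, coeff_zero]
  by_cases hm : m ∈ T
  · simpa [coeffMatrix] using congrFun hc ⟨m, hm⟩
  · refine Finset.sum_eq_zero fun i _ => ?_
    rw [coeff_smul, notMem_support_iff.mp (fun h => hm (hT i h)), smul_zero]

theorem exists_diagonal_mul_coeffMatrix_eq [CommSemiring R] [Fintype ι] [DecidableEq ι]
    (T : Finset (σ →₀ ℕ)) {F G : ι → MvPolynomial σ R} {a : ι → R}
    (h : ∀ i, a i • G i ∈ Submodule.span R (Set.range F)) :
    ∃ C : Matrix ι ι R, Matrix.diagonal a * coeffMatrix T G = C * coeffMatrix T F := by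
  choose C hC using fun i => Submodule.mem_span_range_iff_exists_fun R |>.mp (h i)
  refine ⟨Matrix.of C, Matrix.ext fun i m => ?_⟩
  rw [Matrix.diagonal_mul, Matrix.mul_apply]
  simpa [coeffMatrix, coeff_sum, eq_comm] using congrArg (coeff m.1) (hC i)

end MvPolynomial

section

variable {ι T R : Type*} [Fintype ι] [DecidableEq ι] [Fintype T] [CommRing R]

theorem Matrix.det_mul_ne_zero_of_diagonal_mul_eq [IsDomain R] {A A' : Matrix ι T R}
    {B : Matrix T ι R} {a : ι → R} {C : Matrix ι ι R} (ha : ∀ i, a i ≠ 0)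
    (h : Matrix.diagonal a * A = C * A') (hB : (A * B).det ≠ 0) : (A' * B).det ≠ 0 := by
  intro hA'B
  have hdet := congrArg (fun M => (M * B).det) h
  simp only [Matrix.mul_assoc, Matrix.det_mul, Matrix.det_diagonal, hA'B, mul_zero] at hdet
  exact mul_ne_zero (Finset.prod_ne_zero_iff.mpr fun i _ => ha i) hB hdet

theorem Polynomial.det_mul_map_C_ne_zero_of_map_eval_mul_eq_one [Nontrivial R]
    {A : Matrix ι T R[X]} {N : Matrix T ι R} {x : R} (h : A.map (evalRingHom x) * N = 1) :
    (A * N.map C).det ≠ 0 := by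
  intro h0
  have h1 := congrArg (evalRingHom x) h0
  have hN : N.map (evalRingHom x ∘ C) = N := by ext; simp
  simp only [RingHom.map_det, RingHom.mapMatrix_apply, Matrix.map_mul, Matrix.map_map, hN, h,
    Matrix.det_one, map_zero] at h1
  exact one_ne_zero h1

theorem Polynomial.finite_setOf_not_linearIndependent_row_map_eval [IsDomain R]
    (A : Matrix ι T R[X]) (B : Matrix T ι R[X]) (h : (A * B).det ≠ 0) :
    {x : R | ¬ LinearIndependent R (A.map (evalRingHom x)).row}.Finite := by
  refine (finite_setOfPred_isRoot h).subset fun x hx => ?_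
  by_contra hroot
  have hdet : (A.map (evalRingHom x) * B.map (evalRingHom x)).det ≠ 0 := by
    rwa [← Matrix.map_mul, ← RingHom.mapMatrix_apply, ← RingHom.map_det]
  exact hx <| LinearIndependent.of_comp (B.map (evalRingHom x)).vecMulLinear
    (Matrix.linearIndependent_rows_of_det_ne_zero hdet)

end

theorem linearIndependent_specialization_of_limit_forms_general
    {σ : Type*} {k : Type*} [Field k] {s : ℕ}
    (F G : Fin s → MvPolynomial σ (Polynomial k))
    (hspan : ∀ i, ∃ d : ℕ,
      (MvPolynomial.C (Polynomial.X : Polynomial k)) ^ d * G i ∈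
        Submodule.span (Polynomial k) (Set.range F))
    (hindep : LinearIndependent k fun i => specialize (0 : k) (G i)) :
    {lam : k | ¬ LinearIndependent k fun i => specialize lam (F i)}.Finite := by
  classical
  let T := Finset.univ.biUnion fun i => (specialize (0 : k) (G i)).support
  obtain ⟨N, hN⟩ := Matrix.exists_mul_eq_one_of_linearIndependent_row <|
    linearIndependent_row_coeffMatrix (T := T)
      (fun i _ hm => Finset.mem_biUnion.mpr ⟨i, Finset.mem_univ i, hm⟩) hindep
  have hGN : (coeffMatrix T G * N.map Polynomial.C).det ≠ 0 :=
    Polynomial.det_mul_map_C_ne_zero_of_map_eval_mul_eq_one (x := 0) <| by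
      rwa [← coeffMatrix_map]
  choose d hd using hspan
  obtain ⟨C, hC⟩ := exists_diagonal_mul_coeffMatrix_eq T (F := F) (G := G)
    (a := fun i => Polynomial.X ^ d i)
    fun i => by simpa only [MvPolynomial.smul_eq_C_mul, map_pow] using hd i
  have hFN := Matrix.det_mul_ne_zero_of_diagonal_mul_eq (fun i => pow_ne_zero _ X_ne_zero) hC hGN
  refine (Polynomial.finite_setOf_not_linearIndependent_row_map_eval _ _ hFN).subset
    fun lam hlam => ?_
  rw [Set.mem_ofPred_eq, ← coeffMatrix_map]
  exact mt linearIndependent_of_linearIndependent_row_coeffMatrix hlam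

/-- Proposition 2.3.  Let `F₁,…,F_s ∈ S[t]` be homogeneous of degree `e` (where
`deg t = 0`).  If there are homogeneous degree `e` elements `G₁,…,G_s ∈ S[t]` such that
`t^{dᵢ}·Gᵢ` lies in the `k[t]`-span of the `Fⱼ` for each `i`, and the limit forms
`Gᵢ|_{t=0}` are linearly independent over `k`, then the `Fᵢ|_{t=λ}` are linearly
independent over `k` for all but finitely many `λ ∈ k`. -/
theorem linearIndependent_specialization_of_limit_forms
    {σ : Type*} {k : Type*} [Field k] {s : ℕ} {e : ℕ}
    (F G : Fin s → MvPolynomial σ (Polynomial k))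
    (hF : ∀ i, (F i).IsHomogeneous e)
    (hG : ∀ i, (G i).IsHomogeneous e)
    (hspan : ∀ i, ∃ d : ℕ,
      (MvPolynomial.C (Polynomial.X : Polynomial k)) ^ d * G i ∈
        Submodule.span (Polynomial k) (Set.range F))
    (hindep : LinearIndependent k fun i => specialize (0 : k) (G i)) :
    {lam : k | ¬ LinearIndependent k fun i => specialize lam (F i)}.Finite :=
  linearIndependent_specialization_of_limit_forms_general F G hspan hindep
end

section
/- Let R₁ ↠ R₂ = R₁/P be a surjection of Noetherian local k-algebras with residue field k, where P is an ideal, such that the induced map on cotangent spaces m₁/m₁² → m₂/m₂² is an isomorphism. Suppose that for every n ≥ 3, the canonical surjection R₂ → R₂/m₂^{n-1} lifts along the surjection R₂/m₂^n → R₂/m₂^{n-1} to a k-algebra map R₂ → R₂/m₂^n. Then P = 0, i.e. R₁ → R₂ is an isomorphism. (This is the key step of Lemma A.2: a quotient by an ideal contained in the square of the maximal ideal which admits all liftings along small extensions of the indicated form must be trivial.) -/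
/-!
If `ker f ⊆ m²` and `g ∘ f : R₁ → R₁/mⁿ` agrees with the canonical map modulo `mⁿ⁻¹`, then the
difference of the two ring maps takes values in the square-zero ideal `mⁿ⁻¹/mⁿ`, which `m`
annihilates; it is therefore a derivation vanishing on `m²`. Hence the canonical map kills
`ker f`, i.e. `ker f ⊆ mⁿ`. By induction `ker f ⊆ ⋂ mⁿ = 0` (Krull).
-/

open IsLocalRing

theorem RingHom.eqOn_mul_of_sub_mem {R S : Type*} [CommRing R] [CommRing S] {φ ψ : R →+* S}
    {I : Ideal R} {J : Ideal S} (hsub : ∀ x ∈ I, φ x - ψ x ∈ J) (hIJ : I.map ψ * J = ⊥)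
    (hJ : J * J = ⊥) : ∀ x ∈ I * I, φ x = ψ x := by
  intro x hx
  induction hx using Submodule.mul_induction_on' with
  | mem_mul_mem a ha b hb =>
    have expand : φ (a * b) - ψ (a * b) =
        ψ a * (φ b - ψ b) + ψ b * (φ a - ψ a) + (φ a - ψ a) * (φ b - ψ b) := by
      simp only [map_mul]; ring
    have hab : ψ a * (φ b - ψ b) = 0 := by
      rw [← Ideal.mem_bot, ← hIJ]
      exact Ideal.mul_mem_mul (Ideal.mem_map_of_mem ψ ha) (hsub b hb)
    have hba : ψ b * (φ a - ψ a) = 0 := by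
      rw [← Ideal.mem_bot, ← hIJ]
      exact Ideal.mul_mem_mul (Ideal.mem_map_of_mem ψ hb) (hsub a ha)
    have hsq : (φ a - ψ a) * (φ b - ψ b) = 0 := by
      rw [← Ideal.mem_bot, ← hJ]
      exact Ideal.mul_mem_mul (hsub a ha) (hsub b hb)
    rw [← sub_eq_zero, expand, hab, hba, hsq, add_zero, add_zero]
  | add x _ y _ hx hy => rw [map_add, map_add, hx, hy]

theorem Ideal.ker_le_pow_of_factor_comp_eq {R T : Type*} [CommRing R] [CommRing T]
    {m : Ideal R} {n : ℕ} (hn : 2 ≤ n) {f : R →+* T} (g : T →+* R ⧸ m ^ n)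
    (hg : (Ideal.Quotient.factor (Ideal.pow_le_pow_right (Nat.sub_le n 1))).comp (g.comp f) =
      Ideal.Quotient.mk (m ^ (n - 1)))
    (hf : RingHom.ker f ≤ m ^ 2) : RingHom.ker f ≤ m ^ n := by
  set Q := Ideal.Quotient.mk (m ^ n)
  have hsub : ∀ x ∈ m, (g.comp f) x - Q x ∈ (m ^ (n - 1)).map Q := by
    intro x _
    rw [← Ideal.Quotient.factor_ker (Ideal.pow_le_pow_right (Nat.sub_le n 1)),
      RingHom.sub_mem_ker_iff, Ideal.Quotient.factor_mk]
    exact RingHom.congr_fun hg x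
  have hm : m.map Q * (m ^ (n - 1)).map Q = ⊥ := by
    rw [← Ideal.map_mul, ← pow_succ', Nat.sub_add_cancel (by omega), Ideal.map_quotient_self]
  have hsq : (m ^ (n - 1)).map Q * (m ^ (n - 1)).map Q = ⊥ := by
    rw [eq_bot_iff, ← Ideal.map_mul, ← pow_add, ← Ideal.map_quotient_self (m ^ n)]
    exact Ideal.map_mono (Ideal.pow_le_pow_right (by omega))
  intro x hx
  have hQx := RingHom.eqOn_mul_of_sub_mem hsub hm hsq x (pow_two m ▸ hf hx)
  rw [RingHom.comp_apply, RingHom.mem_ker.1 hx, map_zero] at hQx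
  exact Ideal.Quotient.eq_zero_iff_mem.1 hQx.symm

/-- The key step of Lemma A.2.  Let `f : R₁ ↠ R₂` be a surjection of Noetherian local
`k`-algebras with residue field `k`, whose kernel `P` is contained in `m₁²` (equivalently,
since `f` is surjective: `f` induces an isomorphism on cotangent spaces
`m₁/m₁² → m₂/m₂²`).  Suppose that for every `n ≥ 3` with `ker f ⊆ m₁^{n-1}`, the induced
map `R₂ → R₁/m₁^{n-1}` lifts along the small extension `R₁/m₁^n → R₁/m₁^{n-1}` to a
`k`-algebra map `g : R₂ → R₁/m₁^n` (the lifting condition is expressed, using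
surjectivity of `f`, by `(canonical) ∘ g ∘ f = canonical : R₁ → R₁/m₁^{n-1}`).
Then `P = 0`, i.e. `f` is an isomorphism. -/
theorem ker_eq_bot_of_liftings
    {k R₁ R₂ : Type*} [Field k] [CommRing R₁] [CommRing R₂]
    [Algebra k R₁] [Algebra k R₂]
    [IsNoetherianRing R₁]
    [IsLocalRing R₁]
    (f : R₁ →ₐ[k] R₂)
    -- the kernel `P` is contained in `m₁²`:
    (hP : RingHom.ker f.toRingHom ≤ (IsLocalRing.maximalIdeal R₁) ^ 2)
    -- lifting hypothesis:
    (hlift : ∀ n : ℕ, 3 ≤ n →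
      RingHom.ker f.toRingHom ≤ (IsLocalRing.maximalIdeal R₁) ^ (n - 1) →
      ∃ g : R₂ →ₐ[k] R₁ ⧸ (IsLocalRing.maximalIdeal R₁) ^ n,
        ((Ideal.Quotient.factor (S := (IsLocalRing.maximalIdeal R₁) ^ n)
              (T := (IsLocalRing.maximalIdeal R₁) ^ (n - 1))
              (Ideal.pow_le_pow_right (by omega))).comp
            (g.toRingHom.comp f.toRingHom)) =
          Ideal.Quotient.mk ((IsLocalRing.maximalIdeal R₁) ^ (n - 1))) :
    RingHom.ker f.toRingHom = ⊥ := by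
  set m := maximalIdeal R₁
  have hpow : ∀ n, 2 ≤ n → RingHom.ker f.toRingHom ≤ m ^ n := by
    intro n hn
    induction n, hn using Nat.le_induction with
    | base => exact hP
    | succ n hn ih =>
      obtain ⟨g, hg⟩ := hlift (n + 1) (by omega) (by simpa using ih)
      exact Ideal.ker_le_pow_of_factor_comp_eq (by omega) g.toRingHom hg hP
  rw [eq_bot_iff, ← Ideal.iInf_pow_eq_bot_of_isLocalRing m (maximalIdeal.isMaximal R₁).ne_top]
  exact le_iInf fun i => (hpow (i + 2) (by omega)).trans (Ideal.pow_le_pow_right (by omega))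
end

section
/- Let f be the Hilbert function of S/Ann(F) for a nonzero ternary form F of even degree d = 2e − 2, over a field of characteristic 0 or > d. If for every a ≤ e − 1 one has f(a+1) = a + 2 + g(a), where g is the Hilbert function of S/Ann(α₀ ∘ F) (this holds when Ann(F)_e ⊆ (α₀)), then f(e−2) = f(e−1) + 1, contradicting unimodality of f; hence Ann(F)_e is not contained in (α₀). -/
open MvPolynomial

variable {k : Type*} [Field k]

open scoped Classical in
/-- The contraction (apolarity) action of `S = k[α₀,α₁,α₂]` on the dual polynomial ring. -/
noncomputable def contract (p f : MvPolynomial (Fin 3) k) : MvPolynomial (Fin 3) k :=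
  (AddMonoidAlgebra.coeff p).sum fun a c => (AddMonoidAlgebra.coeff f).sum fun b d => if a ≤ b then monomial (b - a) (c * d) else 0

/-- The degree-`a` graded piece `Ann(F)_a` of the apolar ideal of `F`. -/
noncomputable def annPiece (F : MvPolynomial (Fin 3) k) (a : ℕ) :
    Submodule k (MvPolynomial (Fin 3) k) :=
  Submodule.span k
    {σ | σ ∈ homogeneousSubmodule (Fin 3) k a ∧ contract σ F = 0}

/-- The Hilbert function of `S/Ann(F)`. -/
noncomputable def hilbAnn (F : MvPolynomial (Fin 3) k) (a : ℕ) : ℕ :=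
  Module.finrank k ↥(homogeneousSubmodule (Fin 3) k a) -
    Module.finrank k ↥(annPiece F a)

/-!
Write `B_e` for the binary forms of degree `e` (those free of `X 0`).  Under the apolarity
pairing, `Ann(F)_e` is the orthogonal of `S_{e-2} ∘ F` and `B_e` that of `(X 0)_e`, so
`Ann(F)_e ⊆ (X 0)` would make every binary form of degree `e` equal to `σ ∘ F` with
`deg σ = e - 2`.  For a form `G` of degree `e + m` with `m < e` this is impossible, by induction
on `m`: if every `σ` with `σ ∘ G` binary is divisible by `X 0`, pass to `X 0 ∘ G`; otherwise the
binary parts of these `σ` span a nonzero space `A`, and a dimension count in `B_e` against the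
ideal generated by `A`, which grows in each degree, gives a contradiction.

The premise of the first conjunct is never met: `f(e) = e + 1 + g(e - 1)` says that
`Ann(F)_e = X 0 · Ann(X 0 ∘ F)_{e-1}`.
-/

open Module (finrank)

lemma coeff_contract (p f : MvPolynomial (Fin 3) k) (c : Fin 3 →₀ ℕ) :
    coeff c (contract p f) = ∑ a ∈ p.support, coeff a p * coeff (c + a) f := by
  classical
  unfold contract
  rw [Finsupp.sum, coeff_sum]
  refine Finset.sum_congr rfl fun a _ => ?_
  rw [Finsupp.sum, coeff_sum, Finset.sum_eq_single (c + a)]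
  · simp only [le_add_iff_nonneg_left, zero_le, if_true, add_tsub_cancel_right,
      coeff_monomial]
    rfl
  · intro b _ hne
    split_ifs with hab
    · rw [coeff_monomial, if_neg fun h => hne (by rw [← tsub_add_cancel_of_le hab, h])]
    · simp
  · intro h
    simp only [le_add_iff_nonneg_left, zero_le, if_true, add_tsub_cancel_right, coeff_monomial]
    exact mul_eq_zero_of_right _ (notMem_support_iff.mp h)

lemma coeff_contract_of_support_subset {p : MvPolynomial (Fin 3) k} {s : Finset (Fin 3 →₀ ℕ)}
    (hs : p.support ⊆ s) (f : MvPolynomial (Fin 3) k) (c : Fin 3 →₀ ℕ) :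
    coeff c (contract p f) = ∑ a ∈ s, coeff a p * coeff (c + a) f := by
  rw [coeff_contract]
  exact Finset.sum_subset hs fun a _ ha => by rw [notMem_support_iff.mp ha, zero_mul]

lemma contract_add_left (p q f : MvPolynomial (Fin 3) k) :
    contract (p + q) f = contract p f + contract q f := by
  classical
  ext c
  rw [coeff_add, coeff_contract_of_support_subset support_add,
    coeff_contract_of_support_subset Finset.subset_union_left,
    coeff_contract_of_support_subset Finset.subset_union_right, ← Finset.sum_add_distrib]
  simp only [coeff_add, add_mul]

lemma contract_smul_left (r : k) (p f : MvPolynomial (Fin 3) k) :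
    contract (r • p) f = r • contract p f := by
  ext c
  rw [coeff_smul, coeff_contract_of_support_subset (support_smul (a := r) (f := p)), coeff_contract,
    smul_eq_mul, Finset.mul_sum]
  simp only [coeff_smul, smul_eq_mul, mul_assoc]

lemma contract_add_right (p f g : MvPolynomial (Fin 3) k) :
    contract p (f + g) = contract p f + contract p g := by
  ext c
  simp only [coeff_add, coeff_contract, mul_add, Finset.sum_add_distrib]

lemma contract_smul_right (r : k) (p f : MvPolynomial (Fin 3) k) :
    contract p (r • f) = r • contract p f := by
  ext c
  simp only [coeff_smul, coeff_contract, smul_eq_mul, Finset.mul_sum, mul_left_comm r]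

variable (k) in
noncomputable def contractBilin :
    MvPolynomial (Fin 3) k →ₗ[k] MvPolynomial (Fin 3) k →ₗ[k] MvPolynomial (Fin 3) k :=
  LinearMap.mk₂ k contract contract_add_left contract_smul_left contract_add_right
    contract_smul_right

@[simp]
lemma contract_zero_left (f : MvPolynomial (Fin 3) k) : contract 0 f = 0 :=
  (contractBilin k).map_zero₂ f

@[simp]
lemma contract_zero_right (p : MvPolynomial (Fin 3) k) : contract p 0 = 0 :=
  (contractBilin k p).map_zero

lemma coeff_contract_monomial (a : Fin 3 →₀ ℕ) (r : k) (f : MvPolynomial (Fin 3) k)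
    (c : Fin 3 →₀ ℕ) : coeff c (contract (monomial a r) f) = r * coeff (c + a) f := by
  classical
  rw [coeff_contract_of_support_subset (support_monomial_subset (s := a) (a := r))]
  simp

lemma contract_mul (p q f : MvPolynomial (Fin 3) k) :
    contract (p * q) f = contract p (contract q f) := by
  induction p using MvPolynomial.induction_on' with
  | add p₁ p₂ hp₁ hp₂ => rw [add_mul, contract_add_left, hp₁, hp₂, contract_add_left]
  | monomial a r =>
    induction q using MvPolynomial.induction_on' with
    | add q₁ q₂ hq₁ hq₂ =>
      rw [mul_add, contract_add_left, hq₁, hq₂, contract_add_left q₁, contract_add_right]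
    | monomial b s =>
      ext c
      rw [monomial_mul, coeff_contract_monomial, coeff_contract_monomial,
        coeff_contract_monomial, add_assoc, mul_assoc]

lemma coeff_contract_X (i : Fin 3) (f : MvPolynomial (Fin 3) k) (c : Fin 3 →₀ ℕ) :
    coeff c (contract (X i) f) = coeff (c + Finsupp.single i 1) f := by
  rw [X, coeff_contract_monomial, one_mul]

theorem MvPolynomial.IsHomogeneous.contract {p f : MvPolynomial (Fin 3) k} {a b : ℕ}
    (hp : p.IsHomogeneous a) (hf : f.IsHomogeneous (a + b)) :
    (contract p f).IsHomogeneous b := by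
  intro c hc
  rw [coeff_contract] at hc
  obtain ⟨d, hd, hne⟩ := Finset.exists_ne_zero_of_sum_ne_zero hc
  have hcd := hf (right_ne_zero_of_mul hne)
  have hd' := hp (left_ne_zero_of_mul hne)
  simp only [Finsupp.weight_apply, Pi.one_apply, smul_eq_mul, mul_one] at hcd hd' ⊢
  rw [Finsupp.sum_add_index' (by simp) (by simp)] at hcd
  omega

variable (k) in
/-- In the monomial basis this is the dot product of coefficient vectors. -/
noncomputable def apolarPairing : LinearMap.BilinForm k (MvPolynomial (Fin 3) k) :=
  (contractBilin k).compr₂ (lcoeff k 0)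

lemma apolarPairing_apply (p q : MvPolynomial (Fin 3) k) :
    apolarPairing k p q = coeff 0 (contract p q) :=
  rfl

lemma apolarPairing_comm (p q : MvPolynomial (Fin 3) k) :
    apolarPairing k p q = apolarPairing k q p := by
  classical
  simp only [apolarPairing_apply]
  rw [coeff_contract_of_support_subset (Finset.subset_union_left (s₂ := q.support)),
    coeff_contract_of_support_subset (Finset.subset_union_right (s₁ := p.support))]
  simp only [zero_add, mul_comm]

lemma apolarPairing_monomial_one (b : Fin 3 →₀ ℕ) (q : MvPolynomial (Fin 3) k) :
    apolarPairing k (monomial b 1) q = coeff b q := by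
  rw [apolarPairing_apply, coeff_contract_monomial, one_mul, zero_add]

lemma apolarPairing_contract (p q f : MvPolynomial (Fin 3) k) :
    apolarPairing k p (contract q f) = apolarPairing k (p * q) f := by
  rw [apolarPairing_apply, apolarPairing_apply, contract_mul]

section MonomialSpan

variable {V : Submodule k (MvPolynomial (Fin 3) k)}

lemma eq_zero_of_forall_apolarPairing_eq_zero
    (hV : ∀ p ∈ V, ∀ b ∈ p.support, monomial b 1 ∈ V) {p : MvPolynomial (Fin 3) k}
    (hp : p ∈ V) (h : ∀ q ∈ V, apolarPairing k q p = 0) : p = 0 := by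
  by_contra hp0
  obtain ⟨b, hb⟩ := ne_zero_iff.mp hp0
  have := h _ (hV p hp b (mem_support_iff.mpr hb))
  rw [apolarPairing_monomial_one] at this
  exact hb this

lemma apolarPairing_restrict_nondegenerate (hV : ∀ p ∈ V, ∀ b ∈ p.support, monomial b 1 ∈ V) :
    ((apolarPairing k).restrict V).Nondegenerate :=
  ⟨fun p hp => Subtype.ext <| eq_zero_of_forall_apolarPairing_eq_zero hV p.2 fun q hq => by
      rw [apolarPairing_comm]; exact hp ⟨q, hq⟩,
    fun p hp => Subtype.ext <| eq_zero_of_forall_apolarPairing_eq_zero hV p.2 fun q hq =>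
      hp ⟨q, hq⟩⟩

variable [FiniteDimensional k V]

lemma finrank_inf_orthogonal_add_finrank (hV : ∀ p ∈ V, ∀ b ∈ p.support, monomial b 1 ∈ V)
    {W : Submodule k (MvPolynomial (Fin 3) k)} (hW : W ≤ V) :
    finrank k ↥(V ⊓ (apolarPairing k).orthogonal W) + finrank k W = finrank k V := by
  have horth : ((apolarPairing k).restrict V).orthogonal (W.comap V.subtype) =
      (V ⊓ (apolarPairing k).orthogonal W).comap V.subtype := by
    ext p
    simp only [LinearMap.BilinForm.mem_orthogonal_iff, Submodule.mem_comap,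
      Submodule.subtype_apply, Submodule.mem_inf, p.2, true_and,
      LinearMap.BilinForm.restrict_apply]
    exact ⟨fun h w hw => h ⟨w, hW hw⟩ hw, fun h w hw => h w hw⟩
  have h := LinearMap.BilinForm.finrank_orthogonal (apolarPairing_restrict_nondegenerate hV)
    (W.comap V.subtype)
  rw [horth, (Submodule.comapSubtypeEquivOfLe inf_le_left).finrank_eq,
    (Submodule.comapSubtypeEquivOfLe hW).finrank_eq] at h
  have := Submodule.finrank_mono hW
  omega

lemma inf_orthogonal_inf_orthogonal (hV : ∀ p ∈ V, ∀ b ∈ p.support, monomial b 1 ∈ V)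
    {W : Submodule k (MvPolynomial (Fin 3) k)} (hW : W ≤ V) :
    V ⊓ (apolarPairing k).orthogonal (V ⊓ (apolarPairing k).orthogonal W) = W := by
  refine (Submodule.eq_of_le_of_finrank_eq ?_ ?_).symm
  · refine fun w hw => ⟨hW hw, fun q hq => ?_⟩
    rw [apolarPairing_comm]
    exact hq.2 w hw
  · have h₁ := finrank_inf_orthogonal_add_finrank hV hW
    have h₂ := finrank_inf_orthogonal_add_finrank hV
      (inf_le_left : V ⊓ (apolarPairing k).orthogonal W ≤ V)
    omega

end MonomialSpan

section Homogeneous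

variable {σ R : Type*}

theorem MvPolynomial.homogeneousSubmodule_eq_restrictSupport [CommSemiring R] (n : ℕ) :
    homogeneousSubmodule σ R n = restrictSupport R {d | d.degree = n} :=
  homogeneousSubmodule_eq_finsupp_supported σ R n

instance MvPolynomial.finiteDimensional_homogeneousSubmodule [Field R] [Finite σ] (n : ℕ) :
    FiniteDimensional R (homogeneousSubmodule σ R n) :=
  Module.Finite.iff_fg.mpr (homogeneousSubmodule_fg σ R n)

theorem MvPolynomial.finrank_homogeneousSubmodule [Field R] [Fintype σ] [DecidableEq σ]
    (n : ℕ) :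
    finrank R (homogeneousSubmodule σ R n) = (Fintype.card σ + n - 1).choose n := by
  have hs : {d : σ →₀ ℕ | d.degree = n} = (Finset.univ.finsuppAntidiag n : Finset (σ →₀ ℕ)) := by
    ext d
    simp [Finsupp.degree_eq_sum]
  rw [homogeneousSubmodule_eq_restrictSupport, hs,
    Module.finrank_eq_card_basis (basisRestrictSupport R _)]
  simp [Finset.card_finsuppAntidiag_nat_eq_choose]

end Homogeneous

lemma finrank_homogeneousSubmodule_succ (n : ℕ) :
    finrank k (homogeneousSubmodule (Fin 3) k (n + 1)) =
      finrank k (homogeneousSubmodule (Fin 3) k n) + (n + 2) := by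
  simp only [finrank_homogeneousSubmodule, Fintype.card_fin]
  rw [show 3 + (n + 1) - 1 = (n + 2) + 1 by omega, show 3 + n - 1 = n + 2 by omega,
    Nat.choose_succ_succ, Nat.choose_succ_self_right]

variable (k) in
noncomputable def binaryForms (n : ℕ) : Submodule k (MvPolynomial (Fin 3) k) :=
  restrictSupport k {d | d.degree = n ∧ d 0 = 0}

lemma binaryForms_le_homogeneousSubmodule (n : ℕ) :
    binaryForms k n ≤ homogeneousSubmodule (Fin 3) k n := by
  rw [homogeneousSubmodule_eq_restrictSupport]
  exact restrictSupport_mono k fun _ hd => hd.1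

instance (n : ℕ) : FiniteDimensional k (binaryForms k n) :=
  Submodule.finiteDimensional_of_le (binaryForms_le_homogeneousSubmodule n)

lemma binaryForms_ne_bot (n : ℕ) : binaryForms k n ≠ ⊥ := by
  rw [Submodule.ne_bot_iff]
  refine ⟨monomial (Finsupp.single 1 n) 1, ?_, by simp⟩
  rw [binaryForms, monomial_mem_restrictSupport]
  simp

lemma monomial_mem_homogeneousSubmodule_of_mem_support (n : ℕ) :
    ∀ p ∈ homogeneousSubmodule (Fin 3) k n, ∀ b ∈ p.support,
      monomial b 1 ∈ homogeneousSubmodule (Fin 3) k n := by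
  intro p hp b hb
  rw [homogeneousSubmodule_eq_restrictSupport, mem_restrictSupport_iff] at hp
  rw [homogeneousSubmodule_eq_restrictSupport, monomial_mem_restrictSupport]
  exact .inl (hp hb)

lemma monomial_mem_binaryForms_of_mem_support (n : ℕ) :
    ∀ p ∈ binaryForms k n, ∀ b ∈ p.support, monomial b 1 ∈ binaryForms k n := by
  intro p hp b hb
  rw [binaryForms, mem_restrictSupport_iff] at hp
  rw [binaryForms, monomial_mem_restrictSupport]
  exact .inl (hp hb)

lemma contract_X_zero_eq_zero_of_mem_binaryForms {n : ℕ} {P : MvPolynomial (Fin 3) k}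
    (hP : P ∈ binaryForms k n) : contract (X 0) P = 0 := by
  rw [binaryForms, mem_restrictSupport_iff] at hP
  ext c
  rw [coeff_contract_X, coeff_zero, ← notMem_support_iff]
  intro hc
  simpa using (hP hc).2

variable (k) in
noncomputable def binaryPart : MvPolynomial (Fin 3) k →ₗ[k] MvPolynomial (Fin 3) k where
  toFun p := p.modMonomial (Finsupp.single 0 1)
  map_add' p q := by
    ext c
    by_cases h : Finsupp.single 0 1 ≤ c <;> simp [h]
  map_smul' r p := by
    ext c
    by_cases h : Finsupp.single 0 1 ≤ c <;> simp [h]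

lemma binaryPart_add_X_zero_mul (p : MvPolynomial (Fin 3) k) :
    binaryPart k p + X 0 * p.divMonomial (Finsupp.single 0 1) = p :=
  modMonomial_add_divMonomial_single p 0

lemma coeff_binaryPart (p : MvPolynomial (Fin 3) k) (c : Fin 3 →₀ ℕ) :
    coeff c (binaryPart k p) = if c 0 = 0 then coeff c p else 0 := by
  by_cases h : c 0 = 0
  · rw [if_pos h]
    exact coeff_modMonomial_of_not_le p (by simp [Finsupp.single_le_iff, h])
  · rw [if_neg h]
    exact coeff_modMonomial_of_le p (by simp [Finsupp.single_le_iff]; omega)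

lemma binaryPart_mem_binaryForms {n : ℕ} {p : MvPolynomial (Fin 3) k}
    (hp : p ∈ homogeneousSubmodule (Fin 3) k n) : binaryPart k p ∈ binaryForms k n := by
  rw [homogeneousSubmodule_eq_restrictSupport, mem_restrictSupport_iff] at hp
  rw [binaryForms, mem_restrictSupport_iff]
  intro c hc
  rw [Finset.mem_coe, mem_support_iff, coeff_binaryPart] at hc
  split_ifs at hc with h
  · exact ⟨hp (mem_support_iff.mpr hc), h⟩
  · exact absurd rfl hc

lemma binaryPart_eq_self {n : ℕ} {p : MvPolynomial (Fin 3) k} (hp : p ∈ binaryForms k n) :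
    binaryPart k p = p := by
  rw [binaryForms, mem_restrictSupport_iff] at hp
  ext c
  rw [coeff_binaryPart]
  split_ifs with h
  · rfl
  · exact (notMem_support_iff.mp fun hc => h (hp hc).2).symm

lemma homogeneousSubmodule_zero_le_binaryForms :
    homogeneousSubmodule (Fin 3) k 0 ≤ binaryForms k 0 := by
  rw [homogeneousSubmodule_eq_restrictSupport]
  refine restrictSupport_mono k fun d (hd : d.degree = 0) => ⟨hd, ?_⟩
  rw [Finsupp.degree_eq_zero_iff] at hd
  simp [hd]

lemma divMonomial_X_zero_mem_homogeneousSubmodule {n : ℕ} {p : MvPolynomial (Fin 3) k}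
    (hp : p ∈ homogeneousSubmodule (Fin 3) k (n + 1)) :
    p.divMonomial (Finsupp.single 0 1) ∈ homogeneousSubmodule (Fin 3) k n := by
  intro c hc
  rw [coeff_divMonomial] at hc
  have := hp hc
  simp only [Finsupp.weight_apply, Pi.one_apply, smul_eq_mul, mul_one] at this ⊢
  rw [Finsupp.sum_add_index' (by simp) (by simp), Finsupp.sum_single_index rfl] at this
  omega

lemma contract_binaryPart {φ : MvPolynomial (Fin 3) k} (hφ : contract (X 0) φ = 0)
    (p : MvPolynomial (Fin 3) k) : contract (binaryPart k p) φ = contract p φ := by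
  conv_rhs => rw [← binaryPart_add_X_zero_mul p]
  rw [contract_add_left, mul_comm, contract_mul, hφ, contract_zero_right, add_zero]

/-- An element of `V` of maximal degree in `X i`, multiplied by `X i`, is not in `X j • V`. -/
theorem MvPolynomial.finrank_lt_finrank_map_mulLeft_X_sup {σ : Type*} {i j : σ} (hij : i ≠ j)
    {n : ℕ} {V : Submodule k (MvPolynomial σ k)} [FiniteDimensional k V]
    (hV : V ≤ homogeneousSubmodule σ k n) (hV0 : V ≠ ⊥) :
    finrank k V < finrank k ↥(V.map (LinearMap.mulLeft k (X i)) ⊔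
      V.map (LinearMap.mulLeft k (X j))) := by
  have hbdd : BddAbove {d | ∃ p ∈ V, p ≠ 0 ∧ degreeOf i p = d} := ⟨n, by
    rintro _ ⟨p, hp, -, rfl⟩
    exact (degreeOf_le_totalDegree p i).trans (hV hp).totalDegree_le⟩
  obtain ⟨q, hqV, hq0⟩ := (Submodule.ne_bot_iff V).mp hV0
  obtain ⟨p, hpV, hp0, hpmax⟩ := Nat.sSup_mem (s := {d | ∃ p ∈ V, p ≠ 0 ∧ degreeOf i p = d})
    ⟨_, q, hqV, hq0, rfl⟩ hbdd
  have hmax : ∀ q ∈ V, q ≠ 0 → degreeOf i q ≤ degreeOf i p := fun q hq hq0 =>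
    hpmax ▸ le_csSup hbdd ⟨q, hq, hq0, rfl⟩
  rw [(Submodule.equivMapOfInjective (LinearMap.mulLeft k (X j))
    (mul_right_injective₀ (X_ne_zero j)) V).finrank_eq]
  refine Submodule.finrank_lt_finrank_of_lt (lt_of_le_of_ne le_sup_right fun h => ?_)
  have hmem : X i * p ∈ V.map (LinearMap.mulLeft k (X j)) :=
    h ▸ Submodule.mem_sup_left (Submodule.mem_map_of_mem hpV)
  obtain ⟨q, hq, hqp⟩ := hmem
  have hq0 : q ≠ 0 := by
    rintro rfl
    simp [hp0] at hqp
  have hdeg := congrArg (degreeOf i) hqp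
  simp only [LinearMap.mulLeft_apply] at hdeg
  rw [mul_comm, degreeOf_mul_X_of_ne _ hij, mul_comm,
    (degreeOf_mul_X_eq_degreeOf_add_one_iff i p).mpr hp0] at hdeg
  have := hmax q hq hq0
  omega

lemma X_mul_mem_binaryForms {i : Fin 3} (hi : i ≠ 0) {n : ℕ} {P : MvPolynomial (Fin 3) k}
    (hP : P ∈ binaryForms k n) : X i * P ∈ binaryForms k (n + 1) := by
  rw [binaryForms, mem_restrictSupport_iff] at hP ⊢
  intro c hc
  rw [support_X_mul, Finset.coe_map, Set.mem_image] at hc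
  obtain ⟨d, hd, rfl⟩ := hc
  obtain ⟨hdeg, hd0⟩ := hP hd
  refine ⟨?_, ?_⟩ <;> simp [hdeg, hd0, hi.symm, add_comm]

lemma finrank_inf_binaryForms_add_le (I : Ideal (MvPolynomial (Fin 3) k)) {m : ℕ}
    (hI : I.restrictScalars k ⊓ binaryForms k m ≠ ⊥) (t : ℕ) :
    finrank k ↥(I.restrictScalars k ⊓ binaryForms k m) + t ≤
      finrank k ↥(I.restrictScalars k ⊓ binaryForms k (m + t)) := by
  induction t with
  | zero => rfl
  | succ t ih =>
    have hI₀ : I.restrictScalars k ⊓ binaryForms k (m + t) ≠ ⊥ := by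
      intro h
      rw [h, finrank_bot] at ih
      exact hI (Submodule.finrank_eq_zero.mp (by omega))
    have hgrow := finrank_lt_finrank_map_mulLeft_X_sup (i := 1) (j := 2) (by decide)
      (inf_le_right.trans (binaryForms_le_homogeneousSubmodule _)) hI₀
    have hmul : ∀ i : Fin 3, i ≠ 0 →
        (I.restrictScalars k ⊓ binaryForms k (m + t)).map (LinearMap.mulLeft k (X i)) ≤
          I.restrictScalars k ⊓ binaryForms k (m + (t + 1)) := by
      rintro i hi _ ⟨w, hw, rfl⟩
      exact ⟨I.mul_mem_left _ hw.1, X_mul_mem_binaryForms hi hw.2⟩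
    have := Submodule.finrank_mono (sup_le (hmul 1 (by decide)) (hmul 2 (by decide)))
    omega

theorem Submodule.finrank_map_add_finrank_inf_ker {K M N : Type*} [Field K] [AddCommGroup M]
    [Module K M] [AddCommGroup N] [Module K N] (f : M →ₗ[K] N) (p : Submodule K M)
    [FiniteDimensional K p] :
    finrank K (p.map f) + finrank K ↥(p ⊓ LinearMap.ker f) = finrank K p := by
  have h := (f.domRestrict p).finrank_range_add_finrank_ker
  rwa [LinearMap.range_domRestrict, LinearMap.ker_domRestrict, ← Submodule.finrank_map_subtype_eq,
    Submodule.map_comap_subtype] at h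

variable (k) in
noncomputable def catalecticant (G : MvPolynomial (Fin 3) k) :
    MvPolynomial (Fin 3) k →ₗ[k] MvPolynomial (Fin 3) k :=
  (contractBilin k).flip G

@[simp]
lemma catalecticant_apply (G σ : MvPolynomial (Fin 3) k) : catalecticant k G σ = contract σ G :=
  rfl

lemma contract_eq_zero_of_mem_span {A : Set (MvPolynomial (Fin 3) k)} {φ : MvPolynomial (Fin 3) k}
    (hA : ∀ a ∈ A, contract a φ = 0) {w : MvPolynomial (Fin 3) k} (hw : w ∈ Ideal.span A) :
    contract w φ = 0 := by
  induction hw using Submodule.span_induction with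
  | mem a ha => exact hA a ha
  | zero => exact contract_zero_left φ
  | add a b _ _ ha hb => rw [contract_add_left, ha, hb, add_zero]
  | smul r a _ ha => rw [smul_eq_mul, contract_mul, ha, contract_zero_right]

/-- Let `V` be the forms `σ` of degree `m` with `σ ∘ G` binary, `A` their binary parts and `U`
the forms `τ ∘ G` with `τ ∈ V ∩ (X 0)`.  Then `dim B_e ≤ dim A + dim U`; but `U` is apolar to
the ideal generated by `A`, whose part in `B_e` has dimension `> dim A` unless `A = 0`. -/
theorem binaryPart_eq_zero_of_binaryForms_le_map {e m : ℕ} (hm : m < e)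
    {G : MvPolynomial (Fin 3) k}
    (h : binaryForms k e ≤ (homogeneousSubmodule (Fin 3) k m).map (catalecticant k G))
    {σ : MvPolynomial (Fin 3) k} (hσ : σ ∈ homogeneousSubmodule (Fin 3) k m)
    (hσG : contract σ G ∈ binaryForms k e) : binaryPart k σ = 0 := by
  set V := homogeneousSubmodule (Fin 3) k m ⊓ (binaryForms k e).comap (catalecticant k G)
  set A := V.map (binaryPart k)
  set T := V ⊓ LinearMap.ker (binaryPart k)
  set U := T.map (catalecticant k G)
  set W := (Ideal.span (A : Set (MvPolynomial (Fin 3) k))).restrictScalars k ⊓ binaryForms k e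
  have hVG : V.map (catalecticant k G) = binaryForms k e := by
    refine le_antisymm (Submodule.map_le_iff_le_comap.mpr inf_le_right) fun P hP => ?_
    obtain ⟨τ, hτ, rfl⟩ := h hP
    exact ⟨τ, ⟨hτ, hP⟩, rfl⟩
  have hAB : A ≤ binaryForms k m := Submodule.map_le_iff_le_comap.mpr fun τ hτ =>
    binaryPart_mem_binaryForms hτ.1
  have hUB : U ≤ binaryForms k e := hVG ▸ Submodule.map_mono inf_le_left
  have hcount : finrank k (binaryForms k e) ≤ finrank k U + finrank k A := by
    have h₁ : finrank k (binaryForms k e) +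
        finrank k ↥(V ⊓ LinearMap.ker (catalecticant k G)) = finrank k V :=
      hVG ▸ Submodule.finrank_map_add_finrank_inf_ker _ V
    have h₂ : finrank k A + finrank k T = finrank k V :=
      Submodule.finrank_map_add_finrank_inf_ker _ V
    have h₃ : finrank k U + finrank k ↥(T ⊓ LinearMap.ker (catalecticant k G)) = finrank k T :=
      Submodule.finrank_map_add_finrank_inf_ker _ T
    have h₄ : finrank k ↥(T ⊓ LinearMap.ker (catalecticant k G)) ≤
        finrank k ↥(V ⊓ LinearMap.ker (catalecticant k G)) :=
      Submodule.finrank_mono (inf_le_inf_right _ inf_le_left)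
    omega
  -- For `υ ∈ V`, `τ ∈ T`: `υ ∘ (τ ∘ G) = τ ∘ (υ ∘ G)`, and the `X 0`-parts act trivially.
  have hbin : ∀ ρ ∈ V, contract (X 0) (contract ρ G) = 0 := fun ρ hρ =>
    contract_X_zero_eq_zero_of_mem_binaryForms hρ.2
  have hAU : U ≤ binaryForms k e ⊓ (apolarPairing k).orthogonal W := by
    rintro _ ⟨τ, hτ, rfl⟩
    refine ⟨hUB ⟨τ, hτ, rfl⟩, fun w hw => ?_⟩
    change apolarPairing k w _ = 0
    rw [apolarPairing_apply, contract_eq_zero_of_mem_span _ hw.1, coeff_zero]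
    rintro _ ⟨υ, hυ, rfl⟩
    rw [catalecticant_apply, contract_binaryPart (hbin τ hτ.1), ← contract_mul, mul_comm,
      contract_mul, ← contract_binaryPart (hbin υ hυ), hτ.2, contract_zero_left]
  by_contra hA0
  have hσA : A ≠ ⊥ := fun hA => hA0 <| (Submodule.mem_bot k).mp <|
    hA ▸ Submodule.mem_map_of_mem (show σ ∈ V from ⟨hσ, hσG⟩)
  have h₁ : finrank k ↥(binaryForms k e ⊓ (apolarPairing k).orthogonal W) + finrank k W =
      finrank k (binaryForms k e) :=
    finrank_inf_orthogonal_add_finrank (monomial_mem_binaryForms_of_mem_support e) inf_le_right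
  have hAI : A ≤ (Ideal.span (A : Set (MvPolynomial (Fin 3) k))).restrictScalars k ⊓
      binaryForms k m := fun a ha => ⟨Ideal.subset_span ha, hAB ha⟩
  have h₂ : finrank k A + (e - m) ≤ finrank k W := by
    have := finrank_inf_binaryForms_add_le _ (ne_bot_of_le_ne_bot hσA hAI) (e - m)
    rw [Nat.add_sub_cancel' hm.le] at this
    exact (Nat.add_le_add_right (Submodule.finrank_mono hAI) _).trans this
  have h₃ := Submodule.finrank_mono hAU
  omega

theorem not_binaryForms_le_map_catalecticant {e m : ℕ} (hm : m < e) (G : MvPolynomial (Fin 3) k) :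
    ¬ binaryForms k e ≤ (homogeneousSubmodule (Fin 3) k m).map (catalecticant k G) := by
  induction m generalizing G with
  | zero =>
    intro h
    obtain ⟨P, hP, hP0⟩ := (Submodule.ne_bot_iff _).mp (binaryForms_ne_bot (k := k) e)
    obtain ⟨σ, hσ, rfl⟩ := h hP
    have hσ0 := binaryPart_eq_zero_of_binaryForms_le_map hm h hσ hP
    rw [binaryPart_eq_self (homogeneousSubmodule_zero_le_binaryForms hσ)] at hσ0
    simp [hσ0] at hP0
  | succ m ih =>
    intro h
    refine ih (by omega) (contract (X 0) G) fun P hP => ?_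
    obtain ⟨σ, hσ, rfl⟩ := h hP
    have hσ0 := binaryPart_eq_zero_of_binaryForms_le_map hm h hσ hP
    refine ⟨σ.divMonomial (Finsupp.single 0 1), divMonomial_X_zero_mem_homogeneousSubmodule hσ, ?_⟩
    conv_rhs => rw [catalecticant_apply, ← binaryPart_add_X_zero_mul σ, hσ0, zero_add, mul_comm,
      contract_mul]
    rfl

lemma homogeneousSubmodule_inf_orthogonal_map_catalecticant {a b : ℕ}
    {G : MvPolynomial (Fin 3) k} (hG : G.IsHomogeneous (a + b)) :
    homogeneousSubmodule (Fin 3) k a ⊓ (apolarPairing k).orthogonal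
        ((homogeneousSubmodule (Fin 3) k b).map (catalecticant k G)) =
      homogeneousSubmodule (Fin 3) k a ⊓ LinearMap.ker (catalecticant k G) := by
  have hswap : ∀ σ τ : MvPolynomial (Fin 3) k,
      apolarPairing k (contract τ G) σ = apolarPairing k τ (contract σ G) := fun σ τ => by
    rw [apolarPairing_comm, apolarPairing_contract, mul_comm, ← apolarPairing_contract]
  ext σ
  simp only [Submodule.mem_inf, LinearMap.mem_ker, catalecticant_apply, and_congr_right_iff]
  refine fun hσ => ⟨fun h => ?_, fun h => ?_⟩
  · refine eq_zero_of_forall_apolarPairing_eq_zero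
      (monomial_mem_homogeneousSubmodule_of_mem_support b)
      ((hσ : σ.IsHomogeneous a).contract hG) fun τ hτ => ?_
    rw [← hswap]
    exact h _ ⟨τ, hτ, rfl⟩
  · rintro _ ⟨τ, -, rfl⟩
    change apolarPairing k (contract τ G) σ = 0
    rw [hswap, h, map_zero]

theorem not_forall_mem_span_X_zero {e m : ℕ} (hm : m < e) {F : MvPolynomial (Fin 3) k}
    (hF : F.IsHomogeneous (e + m)) :
    ¬ ∀ σ ∈ homogeneousSubmodule (Fin 3) k e, contract σ F = 0 →
        σ ∈ Ideal.span {(X 0 : MvPolynomial (Fin 3) k)} := by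
  intro hincl
  refine not_binaryForms_le_map_catalecticant hm F fun P hP => ?_
  have hW : (homogeneousSubmodule (Fin 3) k m).map (catalecticant k F) ≤
      homogeneousSubmodule (Fin 3) k e := Submodule.map_le_iff_le_comap.mpr fun τ hτ =>
    (hτ : τ.IsHomogeneous m).contract (add_comm e m ▸ hF)
  rw [← inf_orthogonal_inf_orthogonal (monomial_mem_homogeneousSubmodule_of_mem_support e) hW,
    homogeneousSubmodule_inf_orthogonal_map_catalecticant (add_comm e m ▸ hF)]
  refine ⟨binaryForms_le_homogeneousSubmodule e hP, fun σ hσ => ?_⟩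
  obtain ⟨q, rfl⟩ := Ideal.mem_span_singleton'.mp (hincl σ hσ.1 hσ.2)
  change apolarPairing k (q * X 0) P = 0
  rw [← apolarPairing_contract, contract_X_zero_eq_zero_of_mem_binaryForms hP, map_zero]

lemma annPiece_eq_inf_ker (F : MvPolynomial (Fin 3) k) (a : ℕ) :
    annPiece F a = homogeneousSubmodule (Fin 3) k a ⊓ LinearMap.ker (catalecticant k F) :=
  Submodule.span_eq (homogeneousSubmodule (Fin 3) k a ⊓ LinearMap.ker (catalecticant k F))

instance (F : MvPolynomial (Fin 3) k) (a : ℕ) : FiniteDimensional k (annPiece F a) := by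
  rw [annPiece_eq_inf_ker]
  infer_instance

lemma finrank_annPiece_le (F : MvPolynomial (Fin 3) k) (a : ℕ) :
    finrank k (annPiece F a) ≤ finrank k (homogeneousSubmodule (Fin 3) k a) :=
  Submodule.finrank_mono (annPiece_eq_inf_ker F a ▸ inf_le_left)

/-- The hypothesis says that `Ann(F)_{a+1}` and `Ann(X 0 ∘ F)_a` have the same dimension, so
the injection `ρ ↦ X 0 * ρ` of the latter into the former is onto. -/
lemma forall_mem_span_X_zero_of_hilbAnn_eq {a : ℕ} {F : MvPolynomial (Fin 3) k}
    (h : hilbAnn F (a + 1) = a + 2 + hilbAnn (contract (X 0) F) a) :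
    ∀ σ ∈ homogeneousSubmodule (Fin 3) k (a + 1), contract σ F = 0 →
      σ ∈ Ideal.span {(X 0 : MvPolynomial (Fin 3) k)} := by
  have hmap : (annPiece (contract (X 0) F) a).map (LinearMap.mulLeft k (X 0)) ≤
      annPiece F (a + 1) := by
    rw [annPiece_eq_inf_ker, annPiece_eq_inf_ker]
    rintro _ ⟨ρ, ⟨hρ, hρF⟩, rfl⟩
    refine ⟨?_, ?_⟩
    · simpa [add_comm] using (isHomogeneous_X k 0).mul (hρ : ρ.IsHomogeneous a)
    · simpa [mul_comm, contract_mul] using hρF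
  have hdim : finrank k ↥((annPiece (contract (X 0) F) a).map (LinearMap.mulLeft k (X 0))) =
      finrank k (annPiece F (a + 1)) := by
    have := finrank_annPiece_le F (a + 1)
    have := finrank_annPiece_le (contract (X 0) F) a
    have := finrank_homogeneousSubmodule_succ (k := k) a
    rw [hilbAnn, hilbAnn] at h
    rw [← (Submodule.equivMapOfInjective _ (mul_right_injective₀ (X_ne_zero 0)) _).finrank_eq]
    omega
  intro σ hσ hσF
  obtain ⟨ρ, -, rfl⟩ := (Submodule.eq_of_le_of_finrank_eq hmap hdim).ge <|
    Submodule.subset_span ⟨hσ, hσF⟩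
  exact Ideal.mem_span_singleton'.mpr ⟨ρ, mul_comm _ _⟩

theorem hilbert_contradiction_even_degree_general {e : ℕ} (he : 2 ≤ e)
    (F : MvPolynomial (Fin 3) k)
    (hFhom : F.IsHomogeneous (2 * e - 2)) :
    ((∀ a : ℕ, a + 1 ≤ e →
        hilbAnn F (a + 1) = a + 2 + hilbAnn (contract (X 0) F) a) →
      hilbAnn F (e - 2) = hilbAnn F (e - 1) + 1) ∧
    ¬ (∀ σ ∈ homogeneousSubmodule (Fin 3) k e, contract σ F = 0 →
        σ ∈ Ideal.span {(X 0 : MvPolynomial (Fin 3) k)}) := by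
  have hnot := not_forall_mem_span_X_zero (m := e - 2) (by omega)
    (show F.IsHomogeneous (e + (e - 2)) by rwa [show e + (e - 2) = 2 * e - 2 by omega])
  refine ⟨fun h => (hnot ?_).elim, hnot⟩
  obtain ⟨a, rfl⟩ : ∃ a, e = a + 1 := ⟨e - 1, by omega⟩
  exact forall_mem_span_X_zero_of_hilbAnn_eq (h a le_rfl)

/-- Part of the proof of Lemma 4.2 (even degree case).  Let `F ≠ 0` be a ternary form of
even degree `d = 2e − 2` (char `k` zero or `> d`), and put `f`, `g` for the Hilbert
functions of `S/Ann(F)` and `S/Ann(α₀ ∘ F)`.  If `f(a+1) = a + 2 + g(a)` for all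
`a ≤ e − 1` (which holds when `Ann(F)_e ⊆ (α₀)`), then `f(e−2) = f(e−1) + 1`, which
contradicts the unimodality of `f`; hence `Ann(F)_e` is not contained in `(α₀)`. -/
theorem hilbert_contradiction_even_degree {e : ℕ} (he : 2 ≤ e)
    (hchar : ∀ i : ℕ, 0 < i → i ≤ 2 * e - 2 → (i : k) ≠ 0)
    (F : MvPolynomial (Fin 3) k) (hF : F ≠ 0)
    (hFhom : F.IsHomogeneous (2 * e - 2)) :
    ((∀ a : ℕ, a + 1 ≤ e →
        hilbAnn F (a + 1) = a + 2 + hilbAnn (contract (X 0) F) a) →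
      hilbAnn F (e - 2) = hilbAnn F (e - 1) + 1) ∧
    ¬ (∀ σ ∈ homogeneousSubmodule (Fin 3) k e, contract σ F = 0 →
        σ ∈ Ideal.span {(X 0 : MvPolynomial (Fin 3) k)}) :=
  hilbert_contradiction_even_degree_general he F hFhom
end

section
/- Let S be a standard ℕ-graded polynomial ring over an infinite field, I^sat a saturated one-dimensional homogeneous ideal with linear transverse element ℓ, and suppose multiplication by ℓ on Ext¹_S(I^sat, S/I^sat) is injective. Then for every subideal K ⊆ I^sat with ℓ^N · I^sat ⊆ K for some N, the natural map Ext¹_S(I^sat/K, S/I^sat) → Ext¹_S(I^sat, S/I^sat) is zero. -/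
/-! Multiplication by `ℓ` commutes with composition of Ext classes, so the image of
`Ext¹(I^sat/K, S/I^sat) → Ext¹(I^sat, S/I^sat)` is killed by `ℓ^N`, because `ℓ^N` kills
`I^sat/K`. Since `ℓ` acts injectively on the target, so does `ℓ^N`, and the image is zero. -/

open CategoryTheory

namespace CategoryTheory.Abelian.Ext

variable {R : Type*} [Ring R] {C : Type*} [Category C] [Abelian C] [Linear R C] [HasExt C]

lemma isSMulRegular_iff_injective_comp_mk₀ {X Y : C} {n : ℕ} (r : R) :
    IsSMulRegular (Ext X Y n) r ↔
      Function.Injective (fun e : Ext X Y n => e.comp (mk₀ (r • 𝟙 Y)) (add_zero n)) := by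
  simp only [← smul_eq_comp_mk₀]
  rfl

lemma mk₀_comp_eq_zero_of_pow_smul_eq_zero {X Y Z : C} {n : ℕ} {r : R}
    (hr : IsSMulRegular (Ext X Y n) r) {π : X ⟶ Z} {N : ℕ} (hπ : r ^ N • π = 0)
    (e : Ext Z Y n) :
    (mk₀ π).comp e (zero_add n) = 0 :=
  hr.pow N <| by simp only [← smul_comp, ← mk₀_smul, hπ, mk₀_zero, zero_comp, smul_zero]

end CategoryTheory.Abelian.Ext

lemma Submodule.smul_ofHom_mkQ_eq_zero {S M : Type*} [CommRing S] [AddCommGroup M] [Module S M]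
    (P : Submodule S M) {r : S} (hr : ∀ x : M, r • x ∈ P) :
    r • ModuleCat.ofHom P.mkQ = 0 := by
  ext x
  simpa [← Submodule.Quotient.mk_smul, Submodule.Quotient.mk_eq_zero] using hr x

open MvPolynomial

universe u

theorem ext_map_zero_of_ell_injective_general
    {k : Type u} [Field k] {n : ℕ}
    (Isat : Ideal (MvPolynomial (Fin n) k))
    (ℓ : MvPolynomial (Fin n) k) :
    letI S := MvPolynomial (Fin n) k
    letI := HasDerivedCategory.standard (ModuleCat.{u} S)
    haveI := hasExt_of_hasDerivedCategory (ModuleCat.{u} S)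
    letI X : ModuleCat S := ModuleCat.of S ↥Isat
    letI Y : ModuleCat S := ModuleCat.of S (S ⧸ (Isat : Submodule S S))
    -- multiplication by `ℓ` on `Ext¹(I^sat, S/I^sat)` is injective
    (Function.Injective (fun e : Abelian.Ext X Y 1 =>
        e.comp (Abelian.Ext.mk₀ (ModuleCat.ofHom (LinearMap.lsmul S Y ℓ)))
          (add_zero 1))) →
    ∀ K : Ideal S, K ≤ Isat →
      (∃ N : ℕ, ∀ x ∈ Isat, ℓ ^ N * x ∈ K) →
      -- the natural map `Ext¹(I^sat/K, S/I^sat) → Ext¹(I^sat, S/I^sat)` vanishes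
      ∀ e : Abelian.Ext
          (ModuleCat.of S (↥Isat ⧸ Submodule.comap Isat.subtype (K : Submodule S S))) Y 1,
        (Abelian.Ext.mk₀
            (ModuleCat.ofHom
              (Submodule.mkQ (Submodule.comap Isat.subtype (K : Submodule S S))))).comp
          e (zero_add 1) = 0 := by
  intro hinj K _ ⟨N, hN⟩ e
  -- the instances the statement inlines via `letI`, made available to instance search
  let := HasDerivedCategory.standard (ModuleCat.{u} (MvPolynomial (Fin n) k))
  have := hasExt_of_hasDerivedCategory (ModuleCat.{u} (MvPolynomial (Fin n) k))
  rw [ModuleCat.lsmul_eq_smul_id,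
    ← Abelian.Ext.isSMulRegular_iff_injective_comp_mk₀] at hinj
  exact Abelian.Ext.mk₀_comp_eq_zero_of_pow_smul_eq_zero hinj
    (Submodule.smul_ofHom_mkQ_eq_zero _ fun x => hN x x.2) e

/-- Corollary 3.12.  Let `S` be a standard graded polynomial ring over an infinite field,
`I^sat` a saturated one-dimensional homogeneous ideal with a transverse linear form `ℓ`
(a nonzerodivisor on `S/I^sat`), and suppose multiplication by `ℓ` is injective on
`Ext¹_S(I^sat, S/I^sat)`.  Then for every subideal `K ⊆ I^sat` with `ℓ^N·I^sat ⊆ K` for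
some `N`, the natural map `Ext¹_S(I^sat/K, S/I^sat) → Ext¹_S(I^sat, S/I^sat)` is zero. -/
theorem ext_map_zero_of_ell_injective
    {k : Type u} [Field k] [Infinite k] {n : ℕ}
    (Isat : Ideal (MvPolynomial (Fin n) k))
    (hhom : ∀ f ∈ Isat, ∀ i : ℕ, homogeneousComponent i f ∈ Isat)
    (hsat : Submodule.colon Isat ((Ideal.span (Set.range X) : Ideal (MvPolynomial (Fin n) k)) : Set (MvPolynomial (Fin n) k)) ≤ Isat)
    (hdim : ringKrullDim (MvPolynomial (Fin n) k ⧸ Isat) = 1)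
    (ℓ : MvPolynomial (Fin n) k)
    (hℓ : ℓ ∈ homogeneousSubmodule (Fin n) k 1)
    (htrans : ∀ s : MvPolynomial (Fin n) k, ℓ * s ∈ Isat → s ∈ Isat) :
    letI S := MvPolynomial (Fin n) k
    letI := HasDerivedCategory.standard (ModuleCat.{u} S)
    haveI := hasExt_of_hasDerivedCategory (ModuleCat.{u} S)
    letI X : ModuleCat S := ModuleCat.of S ↥Isat
    letI Y : ModuleCat S := ModuleCat.of S (S ⧸ (Isat : Submodule S S))
    -- multiplication by `ℓ` on `Ext¹(I^sat, S/I^sat)` is injective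
    (Function.Injective (fun e : Abelian.Ext X Y 1 =>
        e.comp (Abelian.Ext.mk₀ (ModuleCat.ofHom (LinearMap.lsmul S Y ℓ)))
          (add_zero 1))) →
    ∀ K : Ideal S, K ≤ Isat →
      (∃ N : ℕ, ∀ x ∈ Isat, ℓ ^ N * x ∈ K) →
      -- the natural map `Ext¹(I^sat/K, S/I^sat) → Ext¹(I^sat, S/I^sat)` vanishes
      ∀ e : Abelian.Ext
          (ModuleCat.of S (↥Isat ⧸ Submodule.comap Isat.subtype (K : Submodule S S))) Y 1,
        (Abelian.Ext.mk₀
            (ModuleCat.ofHom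
              (Submodule.mkQ (Submodule.comap Isat.subtype (K : Submodule S S))))).comp
          e (zero_add 1) = 0 :=
  ext_map_zero_of_ell_injective_general Isat ℓ
end

section
/- Let X be a scheme locally of finite type over a field k and φ : Spec(A) → X a morphism of k-schemes. Then there is a bijection, functorial in A, between Hom_A(H⁰(φ*Ω_{X/k}), A) and the set of morphisms φ' : Spec(A[ε]/ε²) → X whose restriction along Spec(A) ↪ Spec(A[ε]/ε²) equals φ. -/
/-!
A `k`-algebra map `R → A[ε]` (here `TrivSqZeroExt A A`) lifting `R → A` has the form
`r ↦ r + ε δ r`, and since `ε² = 0` its multiplicativity is exactly the Leibniz rule for `δ`: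
such lifts are the `k`-derivations `R → A`. By the universal property of Kähler differentials
these are the `R`-linear maps `Ω[R⁄k] → A`, i.e. by extension of scalars the `A`-linear maps
`A ⊗[R] Ω[R⁄k] → A`. The composite sends `σ` to `r ↦ r + ε σ (1 ⊗ dr)`, which is visibly
natural in `A`.
-/

open scoped TensorProduct

universe u

namespace Derivation

variable {k R A : Type*} [CommSemiring k] [CommSemiring R] [CommSemiring A]
  [Algebra k R] [Algebra k A] [Algebra R A] [IsScalarTower k R A]

def toTrivSqZeroExtAlgHom (δ : Derivation k R A) : R →ₐ[k] TrivSqZeroExt A A where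
  toFun r := (algebraMap R A r, δ r)
  map_one' := TrivSqZeroExt.ext (map_one _) δ.map_one_eq_zero
  map_mul' r s := TrivSqZeroExt.ext (map_mul _ r s) <| by
    change δ (r * s) = algebraMap R A r • δ s + MulOpposite.op (algebraMap R A s) • δ r
    rw [δ.leibniz, op_smul_eq_smul, algebra_compatible_smul A r, algebra_compatible_smul A s]
  map_zero' := TrivSqZeroExt.ext (map_zero _) δ.map_zero
  map_add' r s := TrivSqZeroExt.ext (map_add _ r s) (δ.map_add r s)
  commutes' c := TrivSqZeroExt.ext (IsScalarTower.algebraMap_apply k R A c).symm <| by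
    simp [TrivSqZeroExt.algebraMap_eq_inl']

def ofTrivSqZeroExtAlgHom (f : R →ₐ[k] TrivSqZeroExt A A)
    (hf : ∀ r : R, (f r).fst = algebraMap R A r) : Derivation k R A where
  toFun r := (f r).snd
  map_add' r s := by simp
  map_smul' c r := by simp [Algebra.smul_def, TrivSqZeroExt.algebraMap_eq_inl']
  map_one_eq_zero' := by simp
  leibniz' r s := by
    simp only [LinearMap.coe_mk, AddHom.coe_mk, map_mul, TrivSqZeroExt.snd_mul, hf,
      smul_eq_mul, MulOpposite.smul_eq_mul_unop, MulOpposite.unop_op, Algebra.smul_def]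
    ring

def equivTrivSqZeroExtLift :
    Derivation k R A ≃
      {f : R →ₐ[k] TrivSqZeroExt A A // ∀ r : R, (f r).fst = algebraMap R A r} where
  toFun δ := ⟨δ.toTrivSqZeroExtAlgHom, fun _ => rfl⟩
  invFun f := ofTrivSqZeroExtAlgHom f.1 f.2
  left_inv _ := rfl
  right_inv f := Subtype.ext <| AlgHom.ext fun r => TrivSqZeroExt.ext (f.2 r).symm rfl

end Derivation

section VectorFields

variable (k R : Type*) [CommRing k] [CommRing R] [Algebra k R]
  (A : Type*) [CommRing A] [Algebra k A] [Algebra R A] [IsScalarTower k R A]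

noncomputable def vectorFieldEquivDualNumberLift :
    ((A ⊗[R] Ω[R⁄k]) →ₗ[A] A) ≃
      {f : R →ₐ[k] TrivSqZeroExt A A // ∀ r : R, (f r).fst = algebraMap R A r} :=
  (LinearMap.liftBaseChangeEquiv A).symm.toEquiv
    |>.trans (KaehlerDifferential.linearMapEquivDerivation k R).toEquiv
    |>.trans Derivation.equivTrivSqZeroExtLift

theorem vectorFieldEquivDualNumberLift_apply (σ : (A ⊗[R] Ω[R⁄k]) →ₗ[A] A) (r : R) :
    (vectorFieldEquivDualNumberLift k R A σ).1 r =
      (algebraMap R A r, σ (1 ⊗ₜ KaehlerDifferential.D k R r)) :=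
  rfl

variable {k R A} in
theorem vectorFieldEquivDualNumberLift_naturality
    {B : Type*} [CommRing B] [Algebra k B] [Algebra R B] [IsScalarTower k R B]
    (g : A →ₐ[R] B) {σA : (A ⊗[R] Ω[R⁄k]) →ₗ[A] A} {σB : (B ⊗[R] Ω[R⁄k]) →ₗ[B] B}
    (hσ : ∀ w : Ω[R⁄k], σB (1 ⊗ₜ w) = g (σA (1 ⊗ₜ w))) (r : R) :
    ((vectorFieldEquivDualNumberLift k R B σB).1 r).fst =
        g ((vectorFieldEquivDualNumberLift k R A σA).1 r).fst ∧
      ((vectorFieldEquivDualNumberLift k R B σB).1 r).snd =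
        g ((vectorFieldEquivDualNumberLift k R A σA).1 r).snd := by
  simp only [vectorFieldEquivDualNumberLift_apply]
  exact ⟨(g.commutes r).symm, hσ _⟩

end VectorFields

theorem vector_fields_equiv_dual_number_lifts_general
    (k : Type u) [Field k] (R : Type u) [CommRing R] [Algebra k R] :
    ∃ E : ∀ (A : Type u) [CommRing A] [Algebra k A] [Algebra R A]
        [IsScalarTower k R A],
        ((A ⊗[R] (Ω[R⁄k])) →ₗ[A] A) ≃
          {f : R →ₐ[k] TrivSqZeroExt A A //
            ∀ r : R, (f r).fst = algebraMap R A r},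
      ∀ (A : Type u) [CommRing A] [Algebra k A] [Algebra R A] [IsScalarTower k R A]
        (B : Type u) [CommRing B] [Algebra k B] [Algebra R B] [IsScalarTower k R B]
        (g : A →ₐ[R] B)
        (σA : (A ⊗[R] (Ω[R⁄k])) →ₗ[A] A) (σB : (B ⊗[R] (Ω[R⁄k])) →ₗ[B] B),
        (∀ w : Ω[R⁄k], σB ((1 : B) ⊗ₜ w) = g (σA ((1 : A) ⊗ₜ w))) →
        ∀ r : R,
          ((E B σB : {f : R →ₐ[k] TrivSqZeroExt B B // _}).1 r).fst =
              g (((E A σA).1 r).fst) ∧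
            ((E B σB).1 r).snd = g (((E A σA).1 r).snd) :=
  ⟨fun A _ _ _ _ => vectorFieldEquivDualNumberLift k R A,
    fun _ _ _ _ _ _ _ _ _ _ g _ _ hσ => vectorFieldEquivDualNumberLift_naturality g hσ⟩

/-- Lemma 2.13 (vector fields and the cotangent module), affine case.  Let `X = Spec R`
be a (finite type) `k`-scheme and `φ : Spec A → X` a morphism of `k`-schemes, i.e. an
algebra structure `Algebra R A` compatible with `k`.  Then there is a bijection,
functorial in `A`, between the module of pulled back vector fields
`Hom_A(H⁰(φ*Ω_{X/k}), A) = Hom_A(A ⊗_R Ω[R⁄k], A)` and the set of morphisms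
`φ' : Spec A[ε]/ε² → X` (i.e. `k`-algebra maps `R → A[ε]/ε²`) restricting to `φ` on
`Spec A`.  Functoriality: if `g : A → B` is compatible with the structure maps and the
vector fields `σA`, `σB` correspond under `g`, then so do the associated morphisms. -/
theorem vector_fields_equiv_dual_number_lifts
    (k : Type u) [Field k] (R : Type u) [CommRing R] [Algebra k R]
    [Algebra.FiniteType k R] :
    ∃ E : ∀ (A : Type u) [CommRing A] [Algebra k A] [Algebra R A]
        [IsScalarTower k R A],
        ((A ⊗[R] (Ω[R⁄k])) →ₗ[A] A) ≃
          {f : R →ₐ[k] TrivSqZeroExt A A //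
            ∀ r : R, (f r).fst = algebraMap R A r},
      ∀ (A : Type u) [CommRing A] [Algebra k A] [Algebra R A] [IsScalarTower k R A]
        (B : Type u) [CommRing B] [Algebra k B] [Algebra R B] [IsScalarTower k R B]
        (g : A →ₐ[R] B)
        (σA : (A ⊗[R] (Ω[R⁄k])) →ₗ[A] A) (σB : (B ⊗[R] (Ω[R⁄k])) →ₗ[B] B),
        (∀ w : Ω[R⁄k], σB ((1 : B) ⊗ₜ w) = g (σA ((1 : A) ⊗ₜ w))) →
        ∀ r : R,
          ((E B σB : {f : R →ₐ[k] TrivSqZeroExt B B // _}).1 r).fst =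
              g (((E A σA).1 r).fst) ∧
            ((E B σB).1 r).snd = g (((E A σA).1 r).snd) :=
  vector_fields_equiv_dual_number_lifts_general k R
end
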